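/- For a stable modular Σ-module E (i.e., E(g,n) = 0 whenever 2g + n − 1 ≤ 0) and fixed g ≥ 0, n ≥ −1, there are only finitely many isomorphism classes of stable labeled graphs of genus g with legs labeled by {0,…,n}; consequently the sum MM E(g,n) = ⊕_{[Γ]} E⟨⟨Γ⟩⟩_{Aut(Γ)} over isomorphism classes of such graphs is a finite direct sum. -/

import Mathlib

set_option autoImplicit false

namespace OperadPaper

/-- A (vertex-labeled, leg-labeled) graph in the sense of Getzler–Kapranov:  a finite
set of flags with an involution and a partition into (finitely many, possibly empty)
blocks — given here by the map `bd` to a finite set of vertices — together with a genus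
map on vertices and a labeling of the legs (the fixed flags of the involution) by
`Fin L` (representing `{0, …, n}` with `L = n + 1`). -/
structure LabGraph (L : ℕ) where
  Flag : Type
  Vert : Type
  [fF : Fintype Flag]
  [fV : Fintype Vert]
  [dF : DecidableEq Flag]
  [dV : DecidableEq Vert]
  bd : Flag → Vert
  inv : Flag → Flag
  invol : Function.Involutive inv
  gen : Vert → ℕ
  lab : { x : Flag // inv x = x } ≃ Fin L

attribute [instance] LabGraph.fF LabGraph.fV LabGraph.dF LabGraph.dV

variable {L : ℕ}

/-- Two vertices are adjacent if some edge connects them. -/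
def LabGraph.adj (Γ : LabGraph L) (v w : Γ.Vert) : Prop :=
  ∃ x : Γ.Flag, Γ.bd x = v ∧ Γ.bd (Γ.inv x) = w

/-- Connectedness of the geometric realization. -/
def LabGraph.Connected (Γ : LabGraph L) : Prop :=
  ∀ v w : Γ.Vert, Relation.ReflTransGen Γ.adj v w

/-- The number of edges (two-cycles of the involution). -/
def LabGraph.numEdges (Γ : LabGraph L) : ℕ :=
  (Finset.univ.filter (fun x : Γ.Flag => Γ.inv x ≠ x)).card / 2

/-- The genus `g(Γ) = b_1(Γ) + ∑_v g(v)`, where for a connected graph the first Betti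
number is `b_1(Γ) = #edges − #vertices + 1`. -/
def LabGraph.genus (Γ : LabGraph L) : ℕ :=
  Γ.numEdges + 1 + (∑ v, Γ.gen v) - Fintype.card Γ.Vert

/-- The number of flags adjacent to a vertex. -/
def LabGraph.deg (Γ : LabGraph L) (v : Γ.Vert) : ℕ :=
  (Finset.univ.filter (fun x : Γ.Flag => Γ.bd x = v)).card

/-- Stability: `2(g(v) − 1) + |edge(v)| > 0` at every vertex. -/
def LabGraph.Stable (Γ : LabGraph L) : Prop :=
  ∀ v : Γ.Vert, 2 < 2 * Γ.gen v + Γ.deg v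

/-- Isomorphism of labeled graphs:  bijections of flags and vertices commuting with the
boundary maps and the involutions and preserving the genus labels and the leg labels. -/
def LabGraph.Iso (Γ₁ Γ₂ : LabGraph L) : Prop :=
  ∃ (φ : Γ₁.Flag ≃ Γ₂.Flag) (ψ : Γ₁.Vert ≃ Γ₂.Vert),
    (∀ x, Γ₂.bd (φ x) = ψ (Γ₁.bd x)) ∧
    (∀ x, Γ₂.inv (φ x) = φ (Γ₁.inv x)) ∧
    (∀ v, Γ₂.gen (ψ v) = Γ₁.gen v) ∧
    (∀ (x : { x : Γ₁.Flag // Γ₁.inv x = x }) (y : { y : Γ₂.Flag // Γ₂.inv y = y }),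
      φ x.1 = y.1 → Γ₂.lab y = Γ₁.lab x)

/-! Summing the stability inequality over the vertices gives `3 |V| ≤ 2 ∑ g(v) + |F|`, and
`|F| ≤ 2 |E| + 1 + L`; together with `|E| + 1 + ∑ g(v) ≤ g + |V|` this bounds the number of
vertices, the number of flags and every vertex genus linearly in `g` and `L`. Renumbering flags
and vertices by `Fin`, every stable graph of genus `g` is then isomorphic to one of the finitely
many graphs on `Fin nf` and `Fin nv` with these bounds. -/

namespace LabGraph

lemma card_flag_eq_sum_deg (Γ : LabGraph L) : Fintype.card Γ.Flag = ∑ v, Γ.deg v := by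
  rw [← Finset.card_univ]
  exact Finset.card_eq_sum_card_fiberwise fun x _ => Finset.mem_univ (Γ.bd x)

lemma card_legs (Γ : LabGraph L) :
    (Finset.univ.filter fun x : Γ.Flag => Γ.inv x = x).card = L := by
  rw [← Fintype.card_subtype]
  simpa using Fintype.card_congr Γ.lab

lemma card_flag_le (Γ : LabGraph L) : Fintype.card Γ.Flag ≤ 2 * Γ.numEdges + 1 + L := by
  have hsplit :=
    Finset.card_filter_add_card_filter_not (s := Finset.univ) fun x : Γ.Flag => Γ.inv x = x
  rw [card_legs, Finset.card_univ] at hsplit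
  simp only [numEdges, ne_eq]
  omega

lemma Stable.three_mul_card_vert_le {Γ : LabGraph L} (hS : Γ.Stable) :
    3 * Fintype.card Γ.Vert ≤ 2 * ∑ v, Γ.gen v + Fintype.card Γ.Flag := by
  calc 3 * Fintype.card Γ.Vert = ∑ _v : Γ.Vert, 3 := by simp [mul_comm]
    _ ≤ ∑ v, (2 * Γ.gen v + Γ.deg v) := Finset.sum_le_sum fun v _ => hS v
    _ = 2 * ∑ v, Γ.gen v + Fintype.card Γ.Flag := by
      rw [Finset.sum_add_distrib, Finset.mul_sum, card_flag_eq_sum_deg]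

lemma Stable.card_vert_le {Γ : LabGraph L} (hS : Γ.Stable) :
    Fintype.card Γ.Vert ≤ 2 * Γ.genus + L := by
  have hV := hS.three_mul_card_vert_le
  have hF := Γ.card_flag_le
  unfold genus
  omega

lemma Stable.card_flag_le {Γ : LabGraph L} (hS : Γ.Stable) :
    Fintype.card Γ.Flag ≤ 6 * Γ.genus + 3 * L + 1 := by
  have hV := hS.three_mul_card_vert_le
  have hF := Γ.card_flag_le
  unfold genus
  omega

lemma Stable.gen_le {Γ : LabGraph L} (hS : Γ.Stable) (v : Γ.Vert) :
    Γ.gen v ≤ 3 * Γ.genus + L := by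
  have hV := hS.card_vert_le
  have hv : Γ.gen v ≤ ∑ w, Γ.gen w :=
    Finset.single_le_sum (fun _ _ => Nat.zero_le _) (Finset.mem_univ v)
  unfold genus at hV ⊢
  omega

end LabGraph

set_option synthInstance.maxSize 400 in
structure FinLabGraph (L nf nv G : ℕ) where
  bd : Fin nf → Fin nv
  inv : Fin nf → Fin nf
  invol : ∀ x, inv (inv x) = x
  gen : Fin nv → Fin (G + 1)
  lab : { x : Fin nf // inv x = x } ≃ Fin L
  deriving Fintype

abbrev FinLabGraph.toLabGraph {nf nv G : ℕ} (Γ : FinLabGraph L nf nv G) : LabGraph L where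
  Flag := Fin nf
  Vert := Fin nv
  bd := Γ.bd
  inv := Γ.inv
  invol := Γ.invol
  gen := fun v => Γ.gen v
  lab := Γ.lab

namespace LabGraph

noncomputable def toFinLabGraph (Γ : LabGraph L) {G : ℕ} (hG : ∀ v, Γ.gen v ≤ G) :
    FinLabGraph L (Fintype.card Γ.Flag) (Fintype.card Γ.Vert) G :=
  let e := Fintype.equivFin Γ.Flag
  let e' := Fintype.equivFin Γ.Vert
  { bd := e' ∘ Γ.bd ∘ e.symm
    inv := e ∘ Γ.inv ∘ e.symm
    invol := fun x => by simp [e, Γ.invol (e.symm x)]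
    gen := fun v => ⟨Γ.gen (e'.symm v), Nat.lt_succ_of_le (hG _)⟩
    lab := (e.symm.subtypeEquiv fun x => by simp [← e.eq_symm_apply]).trans Γ.lab }

lemma iso_toFinLabGraph (Γ : LabGraph L) {G : ℕ} (hG : ∀ v, Γ.gen v ≤ G) :
    Γ.Iso (Γ.toFinLabGraph hG).toLabGraph := by
  refine ⟨Fintype.equivFin Γ.Flag, Fintype.equivFin Γ.Vert,
    fun _ => ?_, fun _ => ?_, fun _ => ?_, fun x y hxy => ?_⟩
  · simp [toFinLabGraph]
  · simp [toFinLabGraph]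
  · simp [toFinLabGraph]
  · exact congrArg Γ.lab (Subtype.ext ((Fintype.equivFin Γ.Flag).symm_apply_eq.mpr hxy.symm))

end LabGraph

/-- For fixed `g ≥ 0` and a fixed finite set of leg labels
`{0, …, n}` (of cardinality `L = n + 1 ≥ 0`), there are only finitely many isomorphism
classes of stable labeled (connected) graphs of genus `g` with legs labeled by
`{0, …, n}`:  there is a finite list of such graphs meeting every isomorphism class.
(Consequently, for a stable modular `Σ`-module `E`, the sum
`𝕄E(g,n) = ⊕_{[Γ]} E⟨⟨Γ⟩⟩_{Aut Γ}` is a finite direct sum.) -/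
theorem finitely_many_stable_graphs (g L : ℕ) :
    ∃ (N : ℕ) (reps : Fin N → LabGraph L),
      ∀ Γ : LabGraph L, Γ.Connected → Γ.Stable → Γ.genus = g →
        ∃ i, LabGraph.Iso Γ (reps i) := by
  let Graphs :=
    Σ (nf : Fin (6 * g + 3 * L + 2)) (nv : Fin (2 * g + L + 1)), FinLabGraph L nf nv (3 * g + L)
  let enum := (Fintype.equivFin Graphs).symm
  refine ⟨Fintype.card Graphs, fun i => (enum i).2.2.toLabGraph, ?_⟩
  rintro Γ - hS rfl
  obtain ⟨i, hi⟩ := enum.surjective ⟨⟨_, Nat.lt_succ_of_le hS.card_flag_le⟩,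
    ⟨_, Nat.lt_succ_of_le hS.card_vert_le⟩, Γ.toFinLabGraph hS.gen_le⟩
  refine ⟨i, ?_⟩
  beta_reduce
  rw [hi]
  exact Γ.iso_toFinLabGraph hS.gen_le

end OperadPaper
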